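/- Let k, N ∈ ℕ and let φ, ψ : {1,…,k} → {1,…,N}. If k is odd, then ∫_{O(N)} ∏_{j=1}^k g_{φ(j),ψ(j)} dλ(g) = 0. If k = 2l is even and N ≥ l, then the Gram matrix (c_N(m,m'))_{m,m' ∈ M(2l)} is invertible, and, denoting its inverse by Wg, one has ∫_{O(N)} ∏_{j=1}^k g_{φ(j),ψ(j)} dλ(g) = Σ_{m,m' ∈ M(2l)} 1[φ is constant on each block of m] · 1[ψ is constant on each block of m'] · Wg(m,m'). -/

import Mathlib

open MeasureTheory Matrix

open scoped Classical

/-- Matrices inherit the product measurable structure. -/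
instance matrixMeasurableSpace {m n α : Type*} [MeasurableSpace α] :
    MeasurableSpace (Matrix m n α) :=
  inferInstanceAs (MeasurableSpace (m → n → α))

/-- A pair partition of `{1,…,k}`: a set of blocks, each of cardinality two,
such that every point lies in exactly one block. -/
abbrev PairPartition (k : ℕ) : Type :=
  {P : Finset (Finset (Fin k)) //
    (∀ b ∈ P, b.card = 2) ∧ ∀ x : Fin k, ∃! b, b ∈ P ∧ x ∈ b}

noncomputable instance (k : ℕ) : Fintype (PairPartition k) := Fintype.ofFinite _

/-- The graph on `{1,…,k}` whose edges are the pairs of `m` together with the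
pairs of `m'`. -/
def unionGraph {k : ℕ} (m m' : PairPartition k) : SimpleGraph (Fin k) :=
  SimpleGraph.fromRel (fun x y =>
    (∃ b ∈ m.1, x ∈ b ∧ y ∈ b) ∨ (∃ b ∈ m'.1, x ∈ b ∧ y ∈ b))

/-- The Gram matrix `c_N(m, m') = N^{L(m,m')}`, where `L(m,m')` is the number of
connected components of the union graph of `m` and `m'`. -/
noncomputable def gramO (N k : ℕ) : Matrix (PairPartition k) (PairPartition k) ℝ :=
  fun m m' => (N : ℝ) ^ (Nat.card (unionGraph m m').ConnectedComponent)

/-- `φ` is constant on each block of the pair partition `m`. -/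
def ConstOnBlocks {k N : ℕ} (m : PairPartition k) (φ : Fin k → Fin N) : Prop :=
  ∀ b ∈ m.1, ∀ x ∈ b, ∀ y ∈ b, φ x = φ y

namespace Wg

variable {k N : ℕ}

lemma block_unique (m : PairPartition k) {b b' : Finset (Fin k)} {x : Fin k}
    (hb : b ∈ m.1) (hx : x ∈ b) (hb' : b' ∈ m.1) (hx' : x ∈ b') : b = b' :=
  (m.2.2 x).unique ⟨hb, hx⟩ ⟨hb', hx'⟩

noncomputable def blockOf (m : PairPartition k) (x : Fin k) : Finset (Fin k) :=
  Classical.choose (m.2.2 x).exists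

lemma blockOf_mem (m : PairPartition k) (x : Fin k) : blockOf m x ∈ m.1 :=
  (Classical.choose_spec (m.2.2 x).exists).1

lemma mem_blockOf (m : PairPartition k) (x : Fin k) : x ∈ blockOf m x :=
  (Classical.choose_spec (m.2.2 x).exists).2

lemma blockOf_eq (m : PairPartition k) {b : Finset (Fin k)} {x : Fin k}
    (hb : b ∈ m.1) (hx : x ∈ b) : blockOf m x = b :=
  block_unique m (blockOf_mem m x) (mem_blockOf m x) hb hx

lemma card_blockOf (m : PairPartition k) (x : Fin k) : (blockOf m x).card = 2 :=
  m.2.1 _ (blockOf_mem m x)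

lemma univ_eq_biUnion (m : PairPartition k) :
    (Finset.univ : Finset (Fin k)) = m.1.biUnion id := by
  ext x
  simp only [Finset.mem_univ, Finset.mem_biUnion, id, true_iff]
  exact ⟨blockOf m x, blockOf_mem m x, mem_blockOf m x⟩

lemma blocks_disjoint (m : PairPartition k) :
    (↑m.1 : Set (Finset (Fin k))).PairwiseDisjoint id := by
  intro b hb b' hb' hne
  refine Finset.disjoint_left.mpr fun x hx hx' => hne ?_
  exact block_unique m hb hx hb' hx'

lemma prod_blocks {M : Type*} [CommMonoid M] (m : PairPartition k) (f : Fin k → M) :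
    ∏ j, f j = ∏ b ∈ m.1, ∏ j ∈ b, f j := by
  rw [show (Finset.univ : Finset (Fin k)) = m.1.biUnion id from univ_eq_biUnion m,
    Finset.prod_biUnion (blocks_disjoint m)]
  rfl

lemma two_mul_card_blocks (m : PairPartition k) : 2 * m.1.card = k := by
  have h1 : (Finset.univ : Finset (Fin k)).card = ∑ b ∈ m.1, b.card := by
    rw [univ_eq_biUnion m, Finset.card_biUnion]
    · rfl
    · intro b hb b' hb' hne
      exact blocks_disjoint m hb hb' hne
  have h2 : ∑ b ∈ m.1, b.card = ∑ _b ∈ m.1, 2 :=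
    Finset.sum_congr rfl fun b hb => m.2.1 b hb
  simp only [Finset.card_univ, Fintype.card_fin] at h1
  rw [h2, Finset.sum_const, smul_eq_mul] at h1
  omega

lemma partition_eq_of_subset {m m' : PairPartition k} (h : m.1 ⊆ m'.1) : m = m' := by
  refine Subtype.ext (Finset.Subset.antisymm h fun b' hb' => ?_)
  have hcard : b'.card = 2 := m'.2.1 b' hb'
  have hne : b'.Nonempty := Finset.card_pos.mp (by omega)
  obtain ⟨x, hx⟩ := hne
  have : blockOf m x = b' := block_unique m' (h (blockOf_mem m x)) (mem_blockOf m x) hb' hx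
  rw [← this]; exact blockOf_mem m x

/-- The pairing vector `θ_m`. -/
noncomputable def theta (m : PairPartition k) (φ : Fin k → Fin N) : ℝ :=
  if ConstOnBlocks m φ then 1 else 0

/-- Invariance of a tensor under the (one-sided) action of the orthogonal group. -/
def Invt (T : (Fin k → Fin N) → ℝ) : Prop :=
  ∀ (h : Matrix.orthogonalGroup (Fin N) ℝ) (φ : Fin k → Fin N),
    ∑ χ : Fin k → Fin N, (∏ j, (h : Matrix (Fin N) (Fin N) ℝ) (φ j) (χ j)) * T χ = T φ

lemma row_orth (h : Matrix.orthogonalGroup (Fin N) ℝ) (a a' : Fin N) :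
    ∑ v, (h : Matrix (Fin N) (Fin N) ℝ) a v * (h : Matrix (Fin N) (Fin N) ℝ) a' v
      = if a = a' then (1 : ℝ) else 0 := by
  have hmem : (h : Matrix (Fin N) (Fin N) ℝ) * star (h : Matrix (Fin N) (Fin N) ℝ) = 1 :=
    (Matrix.mem_orthogonalGroup_iff (Fin N) ℝ).mp h.2
  have := congrFun (congrFun hmem a) a'
  rw [Matrix.mul_apply] at this
  simp only [Matrix.star_apply, star_trivial] at this
  rw [this]
  rw [Matrix.one_apply]

noncomputable def bS (m : PairPartition k) (x : Fin k) : {b // b ∈ m.1} :=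
  ⟨blockOf m x, blockOf_mem m x⟩

noncomputable def repS (m : PairPartition k) (b : {b // b ∈ m.1}) : Fin k :=
  (Finset.card_pos.mp (by rw [m.2.1 b.1 b.2]; omega) : (b.1).Nonempty).choose

lemma repS_mem (m : PairPartition k) (b : {b // b ∈ m.1}) : repS m b ∈ b.1 :=
  (Finset.card_pos.mp (by rw [m.2.1 b.1 b.2]; omega) : (b.1).Nonempty).choose_spec

lemma bS_eq (m : PairPartition k) {x : Fin k} {b : {b // b ∈ m.1}} (hx : x ∈ b.1) :
    bS m x = b :=
  Subtype.ext (blockOf_eq m b.2 hx)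

lemma bS_repS (m : PairPartition k) (b : {b // b ∈ m.1}) : bS m (repS m b) = b :=
  bS_eq m (repS_mem m b)

lemma block_pair_cond (m : PairPartition k) (φ : Fin k → Fin N)
    {x y : Fin k} (hxy : x ≠ y) :
    (∀ x' ∈ ({x, y} : Finset (Fin k)), ∀ y' ∈ ({x, y} : Finset (Fin k)), φ x' = φ y')
      ↔ φ x = φ y := by
  constructor
  · intro h; exact h x (by simp) y (by simp)
  · intro h x' hx' y' hy'
    simp only [Finset.mem_insert, Finset.mem_singleton] at hx' hy'
    rcases hx' with rfl | rfl <;> rcases hy' with rfl | rfl <;>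
      first | rfl | exact h | exact h.symm

lemma invt_theta (m : PairPartition k) : Invt (N := N) (theta m) := by
  intro h φ
  have hstep1 : ∀ χ : Fin k → Fin N,
      (∏ j, (h : Matrix (Fin N) (Fin N) ℝ) (φ j) (χ j)) * theta m χ
      = if ConstOnBlocks m χ then (∏ j, (h : Matrix (Fin N) (Fin N) ℝ) (φ j) (χ j)) else 0 := by
    intro χ; rw [theta]; split <;> simp
  calc
    ∑ χ : Fin k → Fin N, (∏ j, (h : Matrix (Fin N) (Fin N) ℝ) (φ j) (χ j)) * theta m χ
        = ∑ χ ∈ Finset.univ.filter (fun χ : Fin k → Fin N => ConstOnBlocks m χ),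
            ∏ j, (h : Matrix (Fin N) (Fin N) ℝ) (φ j) (χ j) := by
          rw [Finset.sum_filter]
          exact Finset.sum_congr rfl fun χ _ => hstep1 χ
    _ = ∑ c : {b // b ∈ m.1} → Fin N,
            ∏ j, (h : Matrix (Fin N) (Fin N) ℝ) (φ j) (c (bS m j)) := by
          refine Finset.sum_bij' (i := fun χ _ => fun b => χ (repS m b))
            (j := fun c _ => fun x => c (bS m x)) ?_ ?_ ?_ ?_ ?_
          · intro χ hχ; exact Finset.mem_univ _
          · intro c hc
            simp only [Finset.mem_filter, Finset.mem_univ, true_and]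
            intro b hb x hx y hy
            show c (bS m x) = c (bS m y)
            rw [bS_eq m (b := ⟨b, hb⟩) hx, bS_eq m (b := ⟨b, hb⟩) hy]
          · intro χ hχ
            simp only [Finset.mem_filter, Finset.mem_univ, true_and] at hχ
            funext x
            exact hχ (blockOf m x) (blockOf_mem m x) (repS m (bS m x))
              (by simpa [bS] using repS_mem m (bS m x)) x (mem_blockOf m x)
          · intro c hc
            funext b
            show c (bS m (repS m b)) = c b
            rw [bS_repS]
          · intro χ hχ
            simp only [Finset.mem_filter, Finset.mem_univ, true_and] at hχ
            refine Finset.prod_congr rfl fun j _ => ?_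
            show ((h : Matrix (Fin N) (Fin N) ℝ) (φ j) (χ j) : ℝ)
              = (h : Matrix (Fin N) (Fin N) ℝ) (φ j) (χ (repS m (bS m j)))
            exact congrArg _ (hχ (blockOf m j) (blockOf_mem m j) j (mem_blockOf m j) (repS m (bS m j))
              (by simpa [bS] using repS_mem m (bS m j)))
    _ = ∑ c : {b // b ∈ m.1} → Fin N,
            ∏ b : {b // b ∈ m.1}, ∏ j ∈ b.1, (h : Matrix (Fin N) (Fin N) ℝ) (φ j) (c b) := by
          refine Finset.sum_congr rfl fun c _ => ?_
          rw [prod_blocks m, ← Finset.prod_attach m.1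
            (fun b => ∏ j ∈ b, (h : Matrix (Fin N) (Fin N) ℝ) (φ j) (c (bS m j)))]
          rw [show m.1.attach = (Finset.univ : Finset {b // b ∈ m.1}) from
            (Finset.univ_eq_attach ..).symm]
          refine Finset.prod_congr rfl fun b _ => Finset.prod_congr rfl fun j hj => ?_
          rw [bS_eq m (b := b) hj]
    _ = ∏ b : {b // b ∈ m.1}, ∑ v : Fin N, ∏ j ∈ b.1, (h : Matrix (Fin N) (Fin N) ℝ) (φ j) v := by
          rw [Finset.prod_univ_sum]
          rw [Fintype.piFinset_univ]
    _ = ∏ b : {b // b ∈ m.1},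
          (if (∀ x ∈ b.1, ∀ y ∈ b.1, φ x = φ y) then (1:ℝ) else 0) := by
          refine Finset.prod_congr rfl fun b _ => ?_
          obtain ⟨x, y, hxy, hb⟩ := Finset.card_eq_two.mp (m.2.1 b.1 b.2)
          calc
            ∑ v : Fin N, ∏ j ∈ b.1, (h : Matrix (Fin N) (Fin N) ℝ) (φ j) v
                = ∑ v : Fin N, (h : Matrix (Fin N) (Fin N) ℝ) (φ x) v
                    * (h : Matrix (Fin N) (Fin N) ℝ) (φ y) v := by
                  refine Finset.sum_congr rfl fun v _ => ?_
                  rw [hb, Finset.prod_pair hxy]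
            _ = if φ x = φ y then (1:ℝ) else 0 := row_orth h (φ x) (φ y)
            _ = _ := by
                  rw [hb]
                  exact (if_congr (block_pair_cond m φ hxy).symm rfl rfl)
    _ = ∏ b ∈ m.1, (if (∀ x ∈ b, ∀ y ∈ b, φ x = φ y) then (1:ℝ) else 0) := by
          rw [← Finset.prod_attach m.1 (fun b => if (∀ x ∈ b, ∀ y ∈ b, φ x = φ y) then (1:ℝ) else 0),
            Finset.univ_eq_attach]
    _ = theta m φ := by
          rw [Finset.prod_boole, theta]
          by_cases hC : ConstOnBlocks m φ
          · rw [if_pos hC]; exact if_pos hC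
          · rw [if_neg hC]; exact if_neg hC

end Wg

-- Section 3: signed permutations
namespace Wg

variable {k N : ℕ}

def sgnPermMatrix (σ : Equiv.Perm (Fin N)) (ε : Fin N → ℝ) : Matrix (Fin N) (Fin N) ℝ :=
  Matrix.of fun a b => if σ b = a then ε a else 0

lemma sgnPerm_mem (σ : Equiv.Perm (Fin N)) (ε : Fin N → ℝ) (hε : ∀ a, ε a * ε a = 1) :
    sgnPermMatrix σ ε ∈ Matrix.orthogonalGroup (Fin N) ℝ := by
  rw [Matrix.mem_orthogonalGroup_iff]
  ext a b
  rw [Matrix.mul_apply, Matrix.one_apply]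
  simp only [Matrix.star_apply, star_trivial, sgnPermMatrix, Matrix.of_apply]
  rw [Finset.sum_eq_single (σ⁻¹ a)]
  · simp only [Matrix.transpose_apply, Matrix.of_apply, Equiv.Perm.inv_def, Equiv.apply_symm_apply, if_pos rfl, if_true]
    by_cases hab : a = b
    · subst hab; simp [hε a]
    · rw [if_neg hab, if_neg hab, mul_zero]
  · intro c _ hc
    rw [if_neg, zero_mul]
    intro hca
    exact hc (by rw [← hca, Equiv.Perm.inv_def, Equiv.symm_apply_apply])
  · intro hmem; exact absurd (Finset.mem_univ _) hmem

lemma invt_sgnPerm {T : (Fin k → Fin N) → ℝ} (hT : Invt T)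
    (σ : Equiv.Perm (Fin N)) (ε : Fin N → ℝ) (hε : ∀ a, ε a * ε a = 1) (φ : Fin k → Fin N) :
    (∏ j, ε (φ j)) * T (⇑σ⁻¹ ∘ φ) = T φ := by
  have h0 := hT ⟨sgnPermMatrix σ ε, sgnPerm_mem σ ε hε⟩ φ
  rw [Finset.sum_eq_single (⇑σ⁻¹ ∘ φ)] at h0
  · rw [← h0]
    congr 1
    refine Finset.prod_congr rfl fun j _ => ?_
    simp [sgnPermMatrix]
  · intro χ _ hχ
    have : ∃ j, χ j ≠ σ⁻¹ (φ j) := by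
      by_contra hall
      push_neg at hall
      exact hχ (funext fun j => hall j)
    obtain ⟨j, hj⟩ := this
    rw [Finset.prod_eq_zero (Finset.mem_univ j), zero_mul]
    show (if σ (χ j) = φ j then ε (φ j) else 0) = 0
    rw [if_neg]
    intro hc
    exact hj (by rw [← hc, Equiv.Perm.inv_def, Equiv.symm_apply_apply])
  · intro hmem; exact absurd (Finset.mem_univ _) hmem

lemma invt_perm {T : (Fin k → Fin N) → ℝ} (hT : Invt T)
    (σ : Equiv.Perm (Fin N)) (φ : Fin k → Fin N) : T (⇑σ ∘ φ) = T φ := by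
  have := invt_sgnPerm hT σ⁻¹ (fun _ => 1) (fun _ => by norm_num) φ
  simpa using this

lemma invt_oddfiber {T : (Fin k → Fin N) → ℝ} (hT : Invt T)
    {φ : Fin k → Fin N} {v : Fin N}
    (hodd : ¬ Even (Finset.univ.filter (fun j => φ j = v)).card) : T φ = 0 := by
  have hε : ∀ a : Fin N, (if a = v then (-1:ℝ) else 1) * (if a = v then (-1:ℝ) else 1) = 1 := by
    intro a; split <;> norm_num
  have h0 := invt_sgnPerm hT 1 (fun a => if a = v then (-1:ℝ) else 1) hε φ
  have hprod : (∏ j, if φ j = v then (-1:ℝ) else 1)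
      = (-1) ^ (Finset.univ.filter (fun j => φ j = v)).card := by
    rw [Finset.prod_ite (fun _ => (-1:ℝ)) (fun _ => (1:ℝ))]
    rw [Finset.prod_const, Finset.prod_const]
    simp
  rw [hprod] at h0
  rw [(Nat.not_even_iff_odd.mp hodd).neg_one_pow] at h0
  have hφ : ⇑(1 : Equiv.Perm (Fin N))⁻¹ ∘ φ = φ := by
    funext j; simp
  rw [hφ] at h0
  linarith

end Wg

-- Section 4: rotations
namespace Wg

open Polynomial

variable {k N : ℕ}

def Dm (p q : Fin N) : Matrix (Fin N) (Fin N) ℝ :=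
  Matrix.single p p 1 + Matrix.single q q 1

def Jm (p q : Fin N) : Matrix (Fin N) (Fin N) ℝ :=
  Matrix.single q p 1 - Matrix.single p q 1

lemma star_stdBasis (i j : Fin N) :
    star (Matrix.single i j (1:ℝ)) = Matrix.single j i 1 := by
  ext a b
  simp only [Matrix.star_apply, star_trivial, Matrix.single, Matrix.of_apply]
  by_cases h1 : i = b <;> by_cases h2 : j = a <;> simp [h1, h2]

lemma Dm_mul_Dm {p q : Fin N} (hpq : p ≠ q) : Dm p q * Dm p q = Dm p q := by
  unfold Dm
  rw [add_mul, mul_add, mul_add]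
  rw [Matrix.single_mul_single_same, Matrix.single_mul_single_of_ne (i := p) (j := p) (c := 1) (h := hpq),
    Matrix.single_mul_single_of_ne (i := q) (j := q) (c := 1) (h := (Ne.symm hpq)), Matrix.single_mul_single_same]
  simp only [mul_one, add_zero, zero_add]
  try abel

lemma Jm_mul_Jm {p q : Fin N} (hpq : p ≠ q) : Jm p q * Jm p q = - Dm p q := by
  unfold Jm Dm
  rw [sub_mul, mul_sub, mul_sub]
  rw [Matrix.single_mul_single_same, Matrix.single_mul_single_same,
    Matrix.single_mul_single_of_ne (i := q) (j := p) (c := 1) (h := hpq),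
    Matrix.single_mul_single_of_ne (i := p) (j := q) (c := 1) (h := (Ne.symm hpq))]
  simp only [mul_one]
  try abel

lemma Dm_mul_Jm {p q : Fin N} (hpq : p ≠ q) : Dm p q * Jm p q = Jm p q := by
  unfold Jm Dm
  rw [add_mul, mul_sub, mul_sub]
  rw [Matrix.single_mul_single_same, Matrix.single_mul_single_same,
    Matrix.single_mul_single_of_ne (i := p) (j := p) (c := 1) (h := hpq),
    Matrix.single_mul_single_of_ne (i := q) (j := q) (c := 1) (h := (Ne.symm hpq))]
  simp only [mul_one]
  try abel

lemma Jm_mul_Dm {p q : Fin N} (hpq : p ≠ q) : Jm p q * Dm p q = Jm p q := by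
  unfold Jm Dm
  rw [sub_mul, mul_add, mul_add]
  rw [Matrix.single_mul_single_same, Matrix.single_mul_single_same,
    Matrix.single_mul_single_of_ne (i := q) (j := p) (c := 1) (h := hpq),
    Matrix.single_mul_single_of_ne (i := p) (j := q) (c := 1) (h := (Ne.symm hpq))]
  simp only [mul_one]
  try abel

lemma star_Dm (p q : Fin N) : star (Dm p q) = Dm p q := by
  unfold Dm
  rw [star_add, star_stdBasis, star_stdBasis]

lemma star_Jm (p q : Fin N) : star (Jm p q) = - Jm p q := by
  unfold Jm
  rw [star_sub, star_stdBasis, star_stdBasis]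
  abel

/-- rotation in the plane `(p,q)`, rationally parametrized. -/
noncomputable def rotM (p q : Fin N) (u : ℝ) : Matrix (Fin N) (Fin N) ℝ :=
  1 + ((1 - u^2)/(1 + u^2) - 1) • Dm p q + (2*u/(1 + u^2)) • Jm p q

lemma rot_mem {p q : Fin N} (hpq : p ≠ q) (u : ℝ) :
    rotM p q u ∈ Matrix.orthogonalGroup (Fin N) ℝ := by
  have h1u : (1:ℝ) + u^2 ≠ 0 := by positivity
  rw [Matrix.mem_orthogonalGroup_iff]
  set a : ℝ := (1 - u^2)/(1 + u^2) - 1 with ha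
  set b : ℝ := 2*u/(1 + u^2) with hb
  have hstar : star (rotM p q u) = 1 + a • Dm p q + (-b) • Jm p q := by
    unfold rotM
    rw [star_add, star_add, star_one, star_smul, star_smul, star_Dm, star_Jm]
    simp only [star_trivial, smul_neg, neg_smul]
    try rfl
  show rotM p q u * star (rotM p q u) = 1
  rw [hstar]
  unfold rotM
  rw [show (1 + a • Dm p q + b • Jm p q) * (1 + a • Dm p q + (-b) • Jm p q)
      = 1 + (a + a + (a*a - b*(-b))) • Dm p q + (b + (-b) + (a * (-b) + b * a)) • Jm p q by
    simp only [add_mul, mul_add, Matrix.smul_mul, Matrix.mul_smul, mul_one, one_mul,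
      Dm_mul_Dm hpq, Jm_mul_Jm hpq, Dm_mul_Jm hpq, Jm_mul_Dm hpq, smul_smul]
    module]
  have hcoefD : a + a + (a*a - b*(-b)) = 0 := by
    rw [ha, hb]; field_simp; ring
  have hcoefJ : b + (-b) + (a * (-b) + b * a) = 0 := by ring
  rw [hcoefD, hcoefJ, zero_smul, zero_smul, add_zero, add_zero]

/-- The polynomial whose value at `u` is `(1+u²)·rotM p q u (a,b)`. -/
noncomputable def Wpoly (p q : Fin N) (a b : Fin N) : Polynomial ℝ :=
  C ((1 : Matrix (Fin N) (Fin N) ℝ) a b) * (1 + X^2)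
    + C (Dm p q a b) * (-2 * X^2) + C (Jm p q a b) * (2*X)

lemma Wpoly_eval (p q : Fin N) (u : ℝ) (a b : Fin N) :
    (Wpoly p q a b).eval u = (1 + u^2) * rotM p q u a b := by
  have h1u : (1:ℝ) + u^2 ≠ 0 := by positivity
  simp only [Wpoly, rotM, Matrix.add_apply, Matrix.smul_apply, smul_eq_mul, eval_add, eval_mul,
    eval_C, eval_pow, eval_X, eval_one, eval_neg, eval_ofNat]
  field_simp
  ring

lemma Wpoly_eval_zero (p q : Fin N) (a b : Fin N) :
    (Wpoly p q a b).eval 0 = (1 : Matrix (Fin N) (Fin N) ℝ) a b := by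
  simp [Wpoly]

lemma Wpoly_deriv_zero (p q : Fin N) (a b : Fin N) :
    ((Wpoly p q a b).derivative).eval 0 = 2 * Jm p q a b := by
  simp only [Wpoly, derivative_add, derivative_mul, derivative_C, derivative_one,
    derivative_X, derivative_pow]
  simp
  ring

lemma deriv_finset_prod {ι : Type*} [DecidableEq ι] (s : Finset ι) (f : ι → Polynomial ℝ) :
    Polynomial.derivative (∏ j ∈ s, f j)
      = ∑ j ∈ s, (∏ i ∈ s.erase j, f i) * Polynomial.derivative (f j) := by
  induction s using Finset.induction_on with
  | empty => simp
  | @insert a s ha ih =>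
    rw [Finset.prod_insert ha, derivative_mul, ih, Finset.sum_insert ha, Finset.erase_insert ha]
    congr 1
    · exact mul_comm _ _
    · rw [Finset.mul_sum]
      refine Finset.sum_congr rfl fun j hj => ?_
      rw [Finset.erase_insert_of_ne (by rintro rfl; exact ha hj), Finset.prod_insert
        (fun hmem => ha (Finset.mem_of_mem_erase hmem))]
      ring

/-- collapsing a sum over functions that agree with `φ` off `j`. -/
lemma sum_update_collapse (φ : Fin k → Fin N) (j : Fin k) (F : (Fin k → Fin N) → ℝ) :
    (∑ χ : Fin k → Fin N, if ∀ i ∈ Finset.univ.erase j, φ i = χ i then F χ else 0)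
      = ∑ v : Fin N, F (Function.update φ j v) := by
  rw [← Finset.sum_filter]
  refine Finset.sum_bij' (i := fun χ _ => χ j) (j := fun v _ => Function.update φ j v)
    ?_ ?_ ?_ ?_ ?_
  · intro χ _; exact Finset.mem_univ _
  · intro v _
    simp only [Finset.mem_filter, Finset.mem_univ, true_and]
    intro i hi
    rw [Function.update_of_ne (Finset.ne_of_mem_erase hi) v φ]
  · intro χ hχ
    simp only [Finset.mem_filter, Finset.mem_univ, true_and] at hχ
    show Function.update φ j (χ j) = χ
    funext i
    by_cases hij : i = j
    · subst hij; simp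
    · rw [Function.update_of_ne hij]
      exact hχ i (Finset.mem_erase.mpr ⟨hij, Finset.mem_univ i⟩)
  · intro v _; simp
  · intro χ hχ
    simp only [Finset.mem_filter, Finset.mem_univ, true_and] at hχ
    show F χ = F (Function.update φ j (χ j))
    congr 1
    funext i
    by_cases hij : i = j
    · subst hij; simp
    · rw [Function.update_of_ne hij]
      exact (hχ i (Finset.mem_erase.mpr ⟨hij, Finset.mem_univ i⟩)).symm

end Wg

-- Section 4b: the rotation relation
namespace Wg

open Polynomial

variable {k N : ℕ}

lemma Jm_apply (p q a b : Fin N) :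
    Jm p q a b = (if q = a ∧ p = b then (1:ℝ) else 0) - (if p = a ∧ q = b then 1 else 0) := by
  simp [Jm, Matrix.sub_apply, Matrix.single]

lemma invt_rot {T : (Fin k → Fin N) → ℝ} (hT : Invt T) {p q : Fin N} (hpq : p ≠ q)
    (φ : Fin k → Fin N) :
    ∑ j ∈ Finset.univ.filter (fun j => φ j = p), T (Function.update φ j q)
      = ∑ j ∈ Finset.univ.filter (fun j => φ j = q), T (Function.update φ j p) := by
  set P1 : Polynomial ℝ :=
    ∑ χ : Fin k → Fin N, C (T χ) * ∏ j, Wpoly p q (φ j) (χ j) with hP1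
  set P2 : Polynomial ℝ := C (T φ) * (1 + X^2)^k with hP2
  have key : P1 = P2 := by
    apply Polynomial.funext
    intro u
    have hrot := hT ⟨rotM p q u, rot_mem hpq u⟩ φ
    calc
      eval u P1 = ∑ χ : Fin k → Fin N, T χ * ∏ j, ((1 + u^2) * rotM p q u (φ j) (χ j)) := by
            rw [hP1, Polynomial.eval_finset_sum]
            refine Finset.sum_congr rfl fun χ _ => ?_
            rw [Polynomial.eval_mul, Polynomial.eval_C, Polynomial.eval_prod]
            congr 1
            exact Finset.prod_congr rfl fun j _ => Wpoly_eval p q u (φ j) (χ j)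
      _ = (1 + u^2)^k * ∑ χ : Fin k → Fin N, (∏ j, rotM p q u (φ j) (χ j)) * T χ := by
            rw [Finset.mul_sum]
            refine Finset.sum_congr rfl fun χ _ => ?_
            rw [Finset.prod_mul_distrib, Finset.prod_const, Finset.card_univ, Fintype.card_fin]
            ring
      _ = (1 + u^2)^k * T φ := by rw [hrot]
      _ = eval u P2 := by
            rw [hP2, Polynomial.eval_mul, Polynomial.eval_C, Polynomial.eval_pow]
            simp [mul_comm]
  have hder := congrArg (fun P : Polynomial ℝ => eval 0 (derivative P)) key
  have hR : eval 0 (derivative P2) = 0 := by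
    rw [hP2]
    simp [Polynomial.derivative_mul, Polynomial.derivative_pow]
  have hL : eval 0 (derivative P1)
      = ∑ χ : Fin k → Fin N, T χ * ∑ j, (∏ i ∈ Finset.univ.erase j,
          (1 : Matrix (Fin N) (Fin N) ℝ) (φ i) (χ i)) * (2 * Jm p q (φ j) (χ j)) := by
    rw [hP1, Polynomial.derivative_sum, Polynomial.eval_finset_sum]
    refine Finset.sum_congr rfl fun χ _ => ?_
    rw [Polynomial.derivative_mul, Polynomial.derivative_C, zero_mul, zero_add,
      Polynomial.eval_mul, Polynomial.eval_C, deriv_finset_prod, Polynomial.eval_finset_sum]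
    congr 1
    refine Finset.sum_congr rfl fun j _ => ?_
    rw [Polynomial.eval_mul, Polynomial.eval_prod]
    congr 1
    · exact Finset.prod_congr rfl fun i _ => Wpoly_eval_zero p q (φ i) (χ i)
    · exact Wpoly_deriv_zero p q (φ j) (χ j)
  rw [hL, hR] at hder
  have hswap : ∑ χ : Fin k → Fin N, T χ * ∑ j, (∏ i ∈ Finset.univ.erase j,
          (1 : Matrix (Fin N) (Fin N) ℝ) (φ i) (χ i)) * (2 * Jm p q (φ j) (χ j))
      = ∑ j : Fin k, ∑ v : Fin N, T (Function.update φ j v) * (2 * Jm p q (φ j) v) := by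
    calc
      ∑ χ : Fin k → Fin N, T χ * ∑ j, (∏ i ∈ Finset.univ.erase j,
            (1 : Matrix (Fin N) (Fin N) ℝ) (φ i) (χ i)) * (2 * Jm p q (φ j) (χ j))
          = ∑ χ : Fin k → Fin N, ∑ j, T χ * ((∏ i ∈ Finset.univ.erase j,
              (1 : Matrix (Fin N) (Fin N) ℝ) (φ i) (χ i)) * (2 * Jm p q (φ j) (χ j))) := by
            exact Finset.sum_congr rfl fun χ _ => Finset.mul_sum _ _ _
      _ = ∑ j : Fin k, ∑ χ : Fin k → Fin N, T χ * ((∏ i ∈ Finset.univ.erase j,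
              (1 : Matrix (Fin N) (Fin N) ℝ) (φ i) (χ i)) * (2 * Jm p q (φ j) (χ j))) :=
            Finset.sum_comm
      _ = ∑ j : Fin k, ∑ χ : Fin k → Fin N,
            (if ∀ i ∈ Finset.univ.erase j, φ i = χ i
             then T χ * (2 * Jm p q (φ j) (χ j)) else 0) := by
            refine Finset.sum_congr rfl fun j _ => Finset.sum_congr rfl fun χ _ => ?_
            have hone : (∏ i ∈ Finset.univ.erase j,
                (1 : Matrix (Fin N) (Fin N) ℝ) (φ i) (χ i))
                = if (∀ i ∈ Finset.univ.erase j, φ i = χ i) then (1:ℝ) else 0 := by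
              have h1 : ∀ i ∈ Finset.univ.erase j,
                  (1 : Matrix (Fin N) (Fin N) ℝ) (φ i) (χ i)
                    = if φ i = χ i then (1:ℝ) else 0 := fun i _ => Matrix.one_apply
              rw [Finset.prod_congr rfl h1, Finset.prod_boole]
              by_cases hc : ∀ i ∈ Finset.univ.erase j, φ i = χ i
              · rw [if_pos hc]; exact (if_pos hc).symm
              · rw [if_neg hc]; exact (if_neg hc).symm
            rw [hone]
            split <;> ring
      _ = ∑ j : Fin k, ∑ v : Fin N, T (Function.update φ j v) * (2 * Jm p q (φ j) v) := by
            refine Finset.sum_congr rfl fun j _ => ?_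
            rw [sum_update_collapse φ j (fun χ => T χ * (2 * Jm p q (φ j) (χ j)))]
            refine Finset.sum_congr rfl fun v _ => ?_
            congr 2
            simp
  rw [hswap] at hder
  have hper : ∀ j : Fin k, ∑ v : Fin N, T (Function.update φ j v) * (2 * Jm p q (φ j) v)
      = 2 * ((if φ j = q then T (Function.update φ j p) else 0)
           - (if φ j = p then T (Function.update φ j q) else 0)) := by
    intro j
    by_cases hq : φ j = q
    · have hnp : φ j ≠ p := by rw [hq]; exact Ne.symm hpq
      have hv : ∀ v : Fin N, T (Function.update φ j v) * (2 * Jm p q (φ j) v)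
          = if p = v then T (Function.update φ j v) * 2 else 0 := by
        intro v
        rw [Jm_apply]
        have c2 : ¬(p = φ j ∧ q = v) := fun hc => hpq (hc.1.trans hq)
        rw [if_neg c2]
        by_cases h3 : p = v
        · rw [if_pos ⟨hq.symm, h3⟩, if_pos h3]; ring
        · rw [if_neg (fun hc => h3 hc.2), if_neg h3]; ring
      rw [Finset.sum_congr rfl fun v _ => hv v, Finset.sum_ite_eq]
      simp [hq, hnp, hpq, Ne.symm hpq, mul_comm]
    · by_cases hp : φ j = p
      · have hv : ∀ v : Fin N, T (Function.update φ j v) * (2 * Jm p q (φ j) v)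
            = if q = v then -(T (Function.update φ j v) * 2) else 0 := by
          intro v
          rw [Jm_apply]
          have c1 : ¬(q = φ j ∧ p = v) := fun hc => hq hc.1.symm
          rw [if_neg c1]
          by_cases h3 : q = v
          · rw [if_pos ⟨hp.symm, h3⟩, if_pos h3]; ring
          · rw [if_neg (fun hc => h3 hc.2), if_neg h3]; ring
        rw [Finset.sum_congr rfl fun v _ => hv v, Finset.sum_ite_eq]
        simp [hq, hp, hpq, Ne.symm hpq, mul_comm]
      · have hv : ∀ v : Fin N, T (Function.update φ j v) * (2 * Jm p q (φ j) v) = 0 := by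
          intro v
          rw [Jm_apply]
          rw [if_neg (fun hc : q = φ j ∧ _ => hq hc.1.symm),
            if_neg (fun hc : p = φ j ∧ _ => hp hc.1.symm)]
          ring
        rw [Finset.sum_congr rfl fun v _ => hv v, Finset.sum_const]
        simp [hq, hp]
  rw [Finset.sum_congr rfl fun j _ => hper j] at hder
  rw [← Finset.mul_sum, Finset.sum_sub_distrib] at hder
  rw [Finset.sum_filter, Finset.sum_filter]
  have h0 : ∑ j : Fin k, (if φ j = q then T (Function.update φ j p) else 0)
      = ∑ j : Fin k, (if φ j = p then T (Function.update φ j q) else 0) := by linarith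
  rw [← h0]

end Wg

-- Section 5a: fibers, permutation extension, fiber partitions
namespace Wg

variable {k N : ℕ}

def fib (φ : Fin k → Fin N) (v : Fin N) : ℕ := (Finset.univ.filter fun j => φ j = v).card

lemma sum_fib (φ : Fin k → Fin N) : ∑ v, fib φ v = k := by
  have := Finset.card_eq_sum_card_fiberwise
    (f := φ) (s := Finset.univ) (t := Finset.univ) (fun x _ => Finset.mem_univ _)
  simpa [fib] using this.symm

lemma fib_zero_of_not_mem {φ : Fin k → Fin N} {v : Fin N}
    (hv : v ∉ Finset.univ.image φ) : fib φ v = 0 := by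
  rw [fib, Finset.card_eq_zero]
  ext j
  simp only [Finset.mem_filter, Finset.mem_univ, true_and, Finset.notMem_empty, iff_false]
  intro hj
  exact hv (Finset.mem_image.mpr ⟨j, Finset.mem_univ j, hj⟩)

lemma fib_pos_of_mem {φ : Fin k → Fin N} {v : Fin N}
    (hv : v ∈ Finset.univ.image φ) : 1 ≤ fib φ v := by
  obtain ⟨j, _, hj⟩ := Finset.mem_image.mp hv
  exact Finset.card_pos.mpr ⟨j, Finset.mem_filter.mpr ⟨Finset.mem_univ j, hj⟩⟩

lemma sum_fib_image (φ : Fin k → Fin N) : ∑ v ∈ Finset.univ.image φ, fib φ v = k := by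
  exact (Finset.sum_subset (Finset.subset_univ _)
    (fun v _ hv => fib_zero_of_not_mem hv)).trans (sum_fib φ)

/-- extend a value-correspondence to a permutation. -/
lemma exists_perm_comp (φ φ' : Fin k → Fin N)
    (h : ∀ i j, φ i = φ j ↔ φ' i = φ' j) :
    ∃ σ : Equiv.Perm (Fin N), ∀ j, σ (φ' j) = φ j := by
  classical
  set A : Finset (Fin N) := Finset.univ.image φ' with hA
  set B : Finset (Fin N) := Finset.univ.image φ with hB
  have pickA : ∀ a : {x // x ∈ A}, ∃ j : Fin k, φ' j = a.1 := by
    intro a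
    obtain ⟨j, _, hj⟩ := Finset.mem_image.mp a.2
    exact ⟨j, hj⟩
  have pickB : ∀ b : {x // x ∈ B}, ∃ j : Fin k, φ j = b.1 := by
    intro b
    obtain ⟨j, _, hj⟩ := Finset.mem_image.mp b.2
    exact ⟨j, hj⟩
  have memB : ∀ j : Fin k, φ j ∈ B := fun j => Finset.mem_image.mpr ⟨j, Finset.mem_univ j, rfl⟩
  have memA : ∀ j : Fin k, φ' j ∈ A := fun j => Finset.mem_image.mpr ⟨j, Finset.mem_univ j, rfl⟩
  let e : {x // x ∈ A} ≃ {x // x ∈ B} :=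
    { toFun := fun a => ⟨φ (pickA a).choose, memB _⟩
      invFun := fun b => ⟨φ' (pickB b).choose, memA _⟩
      left_inv := by
        intro a
        apply Subtype.ext
        show φ' (pickB ⟨φ (pickA a).choose, memB _⟩).choose = a.1
        have h1 : φ (pickB ⟨φ (pickA a).choose, memB _⟩).choose = φ (pickA a).choose :=
          (pickB ⟨φ (pickA a).choose, memB _⟩).choose_spec
        have h2 := (h _ _).mp h1
        rw [h2, (pickA a).choose_spec]
      right_inv := by
        intro b
        apply Subtype.ext
        show φ (pickA ⟨φ' (pickB b).choose, memA _⟩).choose = b.1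
        have h1 : φ' (pickA ⟨φ' (pickB b).choose, memA _⟩).choose = φ' (pickB b).choose :=
          (pickA ⟨φ' (pickB b).choose, memA _⟩).choose_spec
        have h2 := (h _ _).mpr h1
        rw [h2, (pickB b).choose_spec] }
  have hcard : Fintype.card {x // ¬ x ∈ A} = Fintype.card {x // ¬ x ∈ B} := by
    rw [Fintype.card_subtype_compl, Fintype.card_subtype_compl, Fintype.card_congr e]
  let f : {x // ¬ x ∈ A} ≃ {x // ¬ x ∈ B} := Fintype.equivOfCardEq hcard
  refine ⟨((Equiv.sumCompl (· ∈ A)).symm.trans ((e.sumCongr f).trans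
    (Equiv.sumCompl (· ∈ B)))), ?_⟩
  intro j
  have h1 : (Equiv.sumCompl (· ∈ A)).symm (φ' j) = Sum.inl ⟨φ' j, memA j⟩ :=
    Equiv.sumCompl_symm_apply_of_pos (memA j)
  simp only [Equiv.trans_apply, h1, Equiv.sumCongr_apply, Sum.map_inl, Equiv.sumCompl_apply_inl]
  show (e ⟨φ' j, memA j⟩).1 = φ j
  show φ (pickA ⟨φ' j, memA j⟩).choose = φ j
  exact (h _ _).mpr (pickA ⟨φ' j, memA j⟩).choose_spec

/-- the partition of `Fin k` into fibers of a 2-to-1 map. -/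
noncomputable def fiberP (φ : Fin k → Fin N) (h2 : ∀ j, fib φ (φ j) = 2) : PairPartition k := by
  refine ⟨Finset.univ.image (fun j => Finset.univ.filter (fun i => φ i = φ j)), ?_, ?_⟩
  · intro b hb
    obtain ⟨j, _, hj⟩ := Finset.mem_image.mp hb
    rw [← hj]
    exact h2 j
  · intro x
    refine ⟨Finset.univ.filter (fun i => φ i = φ x), ⟨Finset.mem_image.mpr
      ⟨x, Finset.mem_univ x, rfl⟩, Finset.mem_filter.mpr ⟨Finset.mem_univ x, rfl⟩⟩, ?_⟩
    rintro b ⟨hb, hxb⟩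
    obtain ⟨j, _, hj⟩ := Finset.mem_image.mp hb
    rw [← hj]
    have hx : φ x = φ j := by
      have := Finset.mem_filter.mp (hj ▸ hxb)
      exact this.2
    ext i
    simp only [Finset.mem_filter, Finset.mem_univ, true_and, hx]

lemma fiberP_blockOf (φ : Fin k → Fin N) (h2 : ∀ j, fib φ (φ j) = 2) (x : Fin k) :
    blockOf (fiberP φ h2) x = Finset.univ.filter (fun i => φ i = φ x) :=
  blockOf_eq _ (Finset.mem_image.mpr ⟨x, Finset.mem_univ x, rfl⟩)
    (Finset.mem_filter.mpr ⟨Finset.mem_univ x, rfl⟩)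

lemma fiberP_fib (φ : Fin k → Fin N) (h2 : ∀ j, fib φ (φ j) = 2) (x y : Fin k) :
    φ x = φ y ↔ blockOf (fiberP φ h2) x = blockOf (fiberP φ h2) y := by
  rw [fiberP_blockOf, fiberP_blockOf]
  constructor
  · intro hxy; ext i
    simp only [Finset.mem_filter, Finset.mem_univ, true_and, hxy]
  · intro hset
    have : y ∈ Finset.univ.filter (fun i => φ i = φ y) :=
      Finset.mem_filter.mpr ⟨Finset.mem_univ y, rfl⟩
    rw [← hset] at this
    exact (Finset.mem_filter.mp this).2.symm

/-- a tensor constant on blocks of `m`, evaluated at a map whose fibers are the blocks. -/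
lemma const_eq_of_fib {φ : Fin k → Fin N} {m₀ : PairPartition k}
    (hfib : ∀ x y, φ x = φ y ↔ blockOf m₀ x = blockOf m₀ y) :
    ∀ m : PairPartition k, ConstOnBlocks m φ ↔ m = m₀ := by
  intro m
  constructor
  · intro hm
    refine partition_eq_of_subset ?_
    intro b hb
    obtain ⟨x, y, hxy, rfl⟩ := Finset.card_eq_two.mp (m.2.1 b hb)
    have hxyv : φ x = φ y := hm _ hb x (by simp) y (by simp)
    have hblk : blockOf m₀ x = blockOf m₀ y := (hfib x y).mp hxyv
    have hsub : ({x, y} : Finset (Fin k)) ⊆ blockOf m₀ x := by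
      intro i hi
      rcases Finset.mem_insert.mp hi with rfl | hi
      · exact mem_blockOf m₀ i
      · rw [Finset.mem_singleton] at hi
        subst hi
        rw [hblk]
        exact mem_blockOf m₀ i
    have hcard : (blockOf m₀ x).card ≤ ({x, y} : Finset (Fin k)).card := by
      rw [card_blockOf, Finset.card_insert_of_notMem (by simpa using hxy),
        Finset.card_singleton]
    rw [Finset.eq_of_subset_of_card_le hsub hcard]
    exact blockOf_mem m₀ x
  · rintro rfl
    intro b hb x hx y hy
    exact (hfib x y).mpr (by rw [blockOf_eq _ hb hx, blockOf_eq _ hb hy])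

/-- existence of a canonical `φ` for each pair partition when `m.1.card ≤ N`. -/
lemma exists_phiCan (m : PairPartition k) (hcard : m.1.card ≤ N) :
    ∃ φ0 : Fin k → Fin N, ∀ x y, φ0 x = φ0 y ↔ blockOf m x = blockOf m y := by
  have hc : Fintype.card {b // b ∈ m.1} ≤ Fintype.card (Fin N) := by
    rw [Fintype.card_coe, Fintype.card_fin]
    exact hcard
  obtain ⟨emb⟩ := Function.Embedding.nonempty_of_card_le hc
  refine ⟨fun x => emb (bS m x), fun x y => ?_⟩
  rw [emb.apply_eq_iff_eq]
  exact ⟨fun h => congrArg Subtype.val h, fun h => Subtype.ext h⟩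

end Wg

-- Section 5b: main combinatorial induction
namespace Wg

variable {k N : ℕ}

lemma invt_sub_sum {T : (Fin k → Fin N) → ℝ} (hT : Invt T) (c : PairPartition k → ℝ) :
    Invt (fun φ => T φ - ∑ m, c m * theta m φ) := by
  intro h φ
  calc
    ∑ χ : Fin k → Fin N, (∏ j, (h : Matrix (Fin N) (Fin N) ℝ) (φ j) (χ j))
        * (T χ - ∑ m, c m * theta m χ)
        = ∑ χ : Fin k → Fin N, ((∏ j, (h : Matrix (Fin N) (Fin N) ℝ) (φ j) (χ j)) * T χ
            - ∑ m, c m * ((∏ j, (h : Matrix (Fin N) (Fin N) ℝ) (φ j) (χ j)) * theta m χ)) := by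
          refine Finset.sum_congr rfl fun χ _ => ?_
          rw [mul_sub, Finset.mul_sum]
          congr 1
          exact Finset.sum_congr rfl fun m _ => by ring
    _ = (∑ χ : Fin k → Fin N, (∏ j, (h : Matrix (Fin N) (Fin N) ℝ) (φ j) (χ j)) * T χ)
          - ∑ m, c m * ∑ χ : Fin k → Fin N,
              (∏ j, (h : Matrix (Fin N) (Fin N) ℝ) (φ j) (χ j)) * theta m χ := by
          rw [Finset.sum_sub_distrib]
          congr 1
          rw [Finset.sum_comm]
          exact Finset.sum_congr rfl fun m _ => (Finset.mul_sum _ _ _).symm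
    _ = T φ - ∑ m, c m * theta m φ := by
          rw [hT h φ]
          congr 1
          exact Finset.sum_congr rfl fun m _ => by rw [invt_theta m h φ]

lemma invt_zero_of_base {l : ℕ} (hk : k = 2*l) (hlN : l ≤ N)
    {S : (Fin k → Fin N) → ℝ} (hS : Invt S)
    (hbase : ∀ φ : Fin k → Fin N, (∀ j, fib φ (φ j) = 2) → S φ = 0) :
    ∀ φ, S φ = 0 := by
  have h2le : ∀ (φ : Fin k → Fin N), (∀ v, Even (fib φ v)) →
      ∀ v ∈ Finset.univ.image φ, 2 ≤ fib φ v := by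
    intro φ hev v hv
    have h1 := fib_pos_of_mem hv
    obtain ⟨t, ht⟩ := hev v
    omega
  suffices hgen : ∀ n : ℕ, ∀ φ : Fin k → Fin N, (∀ v, Even (fib φ v)) →
      l = (Finset.univ.image φ).card + n → S φ = 0 by
    intro φ
    by_cases heven : ∀ v, Even (fib φ v)
    · have hd2 : 2 * (Finset.univ.image φ).card ≤ 2 * l := by
        calc 2 * (Finset.univ.image φ).card = ∑ _v ∈ Finset.univ.image φ, 2 := by
              rw [Finset.sum_const, smul_eq_mul]; ring
          _ ≤ ∑ v ∈ Finset.univ.image φ, fib φ v := Finset.sum_le_sum (h2le φ heven)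
          _ = k := sum_fib_image φ
          _ = 2 * l := hk
      exact hgen (l - (Finset.univ.image φ).card) φ heven (by omega)
    · push_neg at heven
      obtain ⟨v, hv⟩ := heven
      exact invt_oddfiber hS hv
  intro n
  induction n with
  | zero =>
    intro φ hev hd
    apply hbase
    intro j
    have hmem : φ j ∈ Finset.univ.image φ := Finset.mem_image.mpr ⟨j, Finset.mem_univ j, rfl⟩
    by_contra hne
    have hlt : 2 < fib φ (φ j) := by
      have h1 := fib_pos_of_mem hmem
      obtain ⟨t, ht⟩ := hev (φ j)
      omega
    have hslt : ∑ _v ∈ Finset.univ.image φ, 2 < ∑ v ∈ Finset.univ.image φ, fib φ v :=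
      Finset.sum_lt_sum (h2le φ hev) ⟨φ j, hmem, hlt⟩
    rw [Finset.sum_const, smul_eq_mul, sum_fib_image φ] at hslt
    omega
  | succ n ih =>
    intro φ hev hd
    have hheavy : ∃ v ∈ Finset.univ.image φ, 4 ≤ fib φ v := by
      by_contra hno
      push_neg at hno
      have hall2 : ∀ v ∈ Finset.univ.image φ, fib φ v = 2 := by
        intro v hv
        have h1 := h2le φ hev v hv
        have h2 := hno v hv
        obtain ⟨t, ht⟩ := hev v
        omega
      have hsum : ∑ v ∈ Finset.univ.image φ, fib φ v = 2 * (Finset.univ.image φ).card := by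
        rw [Finset.sum_congr rfl hall2, Finset.sum_const, smul_eq_mul]; ring
      rw [sum_fib_image φ] at hsum
      omega
    obtain ⟨a, haimg, ha4⟩ := hheavy
    have hfresh : ∃ b, b ∉ Finset.univ.image φ := by
      by_contra hno
      push_neg at hno
      have huniv : Finset.univ.image φ = Finset.univ := Finset.eq_univ_iff_forall.mpr hno
      have hcard' : (Finset.univ.image φ).card = N := by
        rw [huniv, Finset.card_univ, Fintype.card_fin]
      omega
    obtain ⟨b, hb⟩ := hfresh
    have hab : a ≠ b := fun h => hb (h ▸ haimg)
    have hfa : (Finset.univ.filter (fun j => φ j = a)).Nonempty :=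
      Finset.card_pos.mp (by show 0 < fib φ a; omega)
    obtain ⟨j₀, hj₀mem⟩ := hfa
    have hφj₀ : φ j₀ = a := (Finset.mem_filter.mp hj₀mem).2
    have hφneb : ∀ i, φ i ≠ b := fun i hi =>
      hb (Finset.mem_image.mpr ⟨i, Finset.mem_univ i, hi⟩)
    set ψ := Function.update φ j₀ b with hψdef
    have hψval : ∀ i, i ≠ j₀ → ψ i = φ i := fun i hi => Function.update_of_ne hi b φ
    have hψj₀ : ψ j₀ = b := Function.update_self j₀ b φ
    have hrel := invt_rot hS hab ψ
    have hSψb : Finset.univ.filter (fun j => ψ j = b) = {j₀} := by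
      ext i
      simp only [Finset.mem_filter, Finset.mem_univ, true_and, Finset.mem_singleton]
      by_cases hi : i = j₀
      · subst hi; simp [hψj₀]
      · rw [hψval i hi]
        exact ⟨fun h => absurd h (hφneb i), fun h => absurd h hi⟩
    have hSψa : Finset.univ.filter (fun j => ψ j = a)
        = (Finset.univ.filter (fun j => φ j = a)).erase j₀ := by
      ext i
      simp only [Finset.mem_filter, Finset.mem_univ, true_and, Finset.mem_erase]
      by_cases hi : i = j₀
      · subst hi
        simp [hψj₀, Ne.symm hab]
      · rw [hψval i hi]
        exact ⟨fun h => ⟨hi, h⟩, fun h => h.2⟩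
    rw [hSψa, hSψb, Finset.sum_singleton] at hrel
    have hupd : Function.update ψ j₀ a = φ := by
      rw [hψdef, Function.update_idem, ← hφj₀, Function.update_eq_self]
    rw [hupd] at hrel
    rw [← hrel]
    apply Finset.sum_eq_zero
    intro j hj
    have hjne : j ≠ j₀ := (Finset.mem_erase.mp hj).1
    have hφj : φ j = a := (Finset.mem_filter.mp ((Finset.mem_erase.mp hj).2)).2
    set χ := Function.update ψ j b with hχdef
    have hχval : ∀ i, i ≠ j₀ → i ≠ j → χ i = φ i := by
      intro i h1 h2
      rw [hχdef, Function.update_of_ne h2, hψval i h1]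
    have hχj₀ : χ j₀ = b := by
      rw [hχdef, Function.update_of_ne (Ne.symm hjne), hψj₀]
    have hχj : χ j = b := by rw [hχdef, Function.update_self]
    -- fibers of χ
    have fχb : Finset.univ.filter (fun i => χ i = b) = {j₀, j} := by
      ext i
      simp only [Finset.mem_filter, Finset.mem_univ, true_and, Finset.mem_insert,
        Finset.mem_singleton]
      by_cases h1 : i = j₀
      · subst h1; simp [hχj₀]
      · by_cases h2 : i = j
        · subst h2; simp [hχj]
        · rw [hχval i h1 h2]
          exact ⟨fun h => absurd h (hφneb i), fun h => absurd h (by tauto)⟩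
    have fχa : Finset.univ.filter (fun i => χ i = a)
        = ((Finset.univ.filter (fun i => φ i = a)).erase j₀).erase j := by
      ext i
      simp only [Finset.mem_filter, Finset.mem_univ, true_and, Finset.mem_erase]
      by_cases h1 : i = j₀
      · subst h1; simp [hχj₀, Ne.symm hab, Ne.symm hjne]
      · by_cases h2 : i = j
        · subst h2; simp [hχj, Ne.symm hab]
        · rw [hχval i h1 h2]
          exact ⟨fun h => ⟨h2, h1, h⟩, fun h => h.2.2⟩
    have fχv : ∀ v, v ≠ a → v ≠ b →
        Finset.univ.filter (fun i => χ i = v) = Finset.univ.filter (fun i => φ i = v) := by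
      intro v hva hvb
      ext i
      simp only [Finset.mem_filter, Finset.mem_univ, true_and]
      by_cases h1 : i = j₀
      · subst h1
        rw [hχj₀, hφj₀]
        exact ⟨fun h => absurd h.symm hvb, fun h => absurd h.symm hva⟩
      · by_cases h2 : i = j
        · subst h2
          rw [hχj, hφj]
          exact ⟨fun h => absurd h.symm hvb, fun h => absurd h.symm hva⟩
        · rw [hχval i h1 h2]
    have hj₀f : j₀ ∈ Finset.univ.filter (fun i => φ i = a) :=
      Finset.mem_filter.mpr ⟨Finset.mem_univ _, hφj₀⟩
    have hjf : j ∈ (Finset.univ.filter (fun i => φ i = a)).erase j₀ := hj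
    have hfib_a : fib χ a = fib φ a - 2 := by
      rw [fib, fχa, Finset.card_erase_of_mem hjf, Finset.card_erase_of_mem hj₀f]
      have ha4' : 4 ≤ (Finset.univ.filter (fun i => φ i = a)).card := ha4
      show _ = (Finset.univ.filter (fun i => φ i = a)).card - 2
      omega
    have hfind : ∃ i', i' ≠ j₀ ∧ i' ≠ j ∧ φ i' = a := by
      have ha4' : 4 ≤ (Finset.univ.filter (fun i => φ i = a)).card := ha4
      have hpos : 0 < (((Finset.univ.filter (fun i => φ i = a)).erase j₀).erase j).card := by
        rw [Finset.card_erase_of_mem hjf, Finset.card_erase_of_mem hj₀f]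
        omega
      obtain ⟨i', hi'⟩ := Finset.card_pos.mp hpos
      have e1 : i' ≠ j := (Finset.mem_erase.mp hi').1
      have e2 : i' ≠ j₀ := (Finset.mem_erase.mp (Finset.mem_erase.mp hi').2).1
      have e3 : φ i' = a := (Finset.mem_filter.mp
        (Finset.mem_erase.mp (Finset.mem_erase.mp hi').2).2).2
      exact ⟨i', e2, e1, e3⟩
    -- image of χ
    have himg : Finset.univ.image χ = insert b (Finset.univ.image φ) := by
      ext v
      simp only [Finset.mem_image, Finset.mem_univ, true_and, Finset.mem_insert]
      constructor
      · rintro ⟨i, hi⟩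
        by_cases h1 : i = j₀
        · subst h1; left; rw [← hi, hχj₀]
        · by_cases h2 : i = j
          · subst h2; left; rw [← hi, hχj]
          · right; exact ⟨i, by rw [← hi, hχval i h1 h2]⟩
      · rintro (rfl | ⟨i, hi⟩)
        · exact ⟨j₀, hχj₀⟩
        · by_cases h1 : i = j₀
          · obtain ⟨i', e1, e2, e3⟩ := hfind
            exact ⟨i', by rw [hχval i' e1 e2, e3, ← hi, h1, hφj₀]⟩
          · by_cases h2 : i = j
            · obtain ⟨i', e1, e2, e3⟩ := hfind
              exact ⟨i', by rw [hχval i' e1 e2, e3, ← hi, h2, hφj]⟩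
            · exact ⟨i, by rw [hχval i h1 h2, hi]⟩
    apply ih χ
    · intro v
      by_cases hvb : v = b
      · subst hvb
        rw [fib, fχb]
        rw [Finset.card_insert_of_notMem (by simpa using Ne.symm hjne), Finset.card_singleton]
        exact ⟨1, rfl⟩
      · by_cases hva : v = a
        · rw [hva, hfib_a]
          obtain ⟨t, ht⟩ := hev a
          have ha4' : 4 ≤ fib φ a := ha4
          exact ⟨t - 1, by omega⟩
        · rw [fib, fχv v hva hvb]
          exact hev v
    · rw [himg, Finset.card_insert_of_notMem hb]
      omega

/-- the span theorem: an invariant tensor is a combination of pairing vectors. -/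
theorem invt_span {l : ℕ} (hk : k = 2*l) (hlN : l ≤ N)
    {T : (Fin k → Fin N) → ℝ} (hT : Invt T)
    (Φ : PairPartition k → (Fin k → Fin N))
    (hΦ : ∀ m x y, Φ m x = Φ m y ↔ blockOf m x = blockOf m y) :
    ∀ φ, T φ = ∑ m, T (Φ m) * theta m φ := by
  have hS : Invt (fun φ => T φ - ∑ m, T (Φ m) * theta m φ) :=
    invt_sub_sum hT (fun m => T (Φ m))
  have hbase : ∀ φ : Fin k → Fin N, (∀ j, fib φ (φ j) = 2) →
      T φ - ∑ m, T (Φ m) * theta m φ = 0 := by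
    intro φ h2
    set m₀ := fiberP φ h2 with hm₀
    have hfib := fiberP_fib φ h2
    have hsum : ∑ m, T (Φ m) * theta m φ = T (Φ m₀) := by
      have hθ : ∀ m : PairPartition k, theta m φ = if m = m₀ then (1:ℝ) else 0 := by
        intro m
        rw [theta]
        by_cases hm : m = m₀
        · rw [if_pos ((const_eq_of_fib hfib m).mpr hm), if_pos hm]
        · rw [if_neg (fun hc => hm ((const_eq_of_fib hfib m).mp hc)), if_neg hm]
      calc ∑ m, T (Φ m) * theta m φ
          = ∑ m, (if m = m₀ then T (Φ m) else 0) := by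
            refine Finset.sum_congr rfl fun m _ => ?_
            rw [hθ m]
            split <;> ring
        _ = T (Φ m₀) := by
            rw [Finset.sum_ite_eq' Finset.univ m₀ (fun m => T (Φ m))]
            exact if_pos (Finset.mem_univ m₀)
    rw [hsum]
    have hcomp : ∀ i j : Fin k, φ i = φ j ↔ Φ m₀ i = Φ m₀ j := by
      intro i j
      rw [hfib i j, hΦ m₀ i j]
    obtain ⟨σ, hσ⟩ := exists_perm_comp φ (Φ m₀) hcomp
    have hφeq : ⇑σ ∘ (Φ m₀) = φ := funext hσ
    have := invt_perm hT σ (Φ m₀)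
    rw [hφeq] at this
    rw [this]
    ring
  have hzero := invt_zero_of_base hk hlN hS hbase
  intro φ
  have := hzero φ
  linarith

end Wg

-- Section 6: Gram matrix
namespace Wg

open Matrix
open scoped Classical

variable {k N : ℕ}

lemma const_of_adj {m m' : PairPartition k} {φ : Fin k → Fin N}
    (hc : ConstOnBlocks m φ) (hc' : ConstOnBlocks m' φ) :
    ∀ x y, (unionGraph m m').Adj x y → φ x = φ y := by
  intro x y hadj
  rw [unionGraph, SimpleGraph.fromRel_adj] at hadj
  obtain ⟨hne, hrel | hrel⟩ := hadj
  · rcases hrel with ⟨b, hb, hx, hy⟩ | ⟨b, hb, hx, hy⟩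
    · exact hc b hb x hx y hy
    · exact hc' b hb x hx y hy
  · rcases hrel with ⟨b, hb, hy, hx⟩ | ⟨b, hb, hy, hx⟩
    · exact hc b hb x hx y hy
    · exact hc' b hb x hx y hy

noncomputable def colorEquiv (m m' : PairPartition k) :
    {φ : Fin k → Fin N // ConstOnBlocks m φ ∧ ConstOnBlocks m' φ}
      ≃ ((unionGraph m m').ConnectedComponent → Fin N) where
  toFun φ := SimpleGraph.ConnectedComponent.lift φ.1 (fun v w p hp => by
    clear hp
    induction p with
    | nil => rfl
    | cons hadj _ ih => exact (const_of_adj φ.2.1 φ.2.2 _ _ hadj).trans ih)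
  invFun c := by
    refine ⟨fun j => c ((unionGraph m m').connectedComponentMk j), ?_, ?_⟩
    · intro b hb x hx y hy
      show c _ = c _
      congr 1
      by_cases hxy : x = y
      · rw [hxy]
      · refine SimpleGraph.ConnectedComponent.sound ?_
        refine SimpleGraph.Adj.reachable ?_
        rw [unionGraph, SimpleGraph.fromRel_adj]
        exact ⟨hxy, Or.inl (Or.inl ⟨b, hb, hx, hy⟩)⟩
    · intro b hb x hx y hy
      show c _ = c _
      congr 1
      by_cases hxy : x = y
      · rw [hxy]
      · refine SimpleGraph.ConnectedComponent.sound ?_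
        refine SimpleGraph.Adj.reachable ?_
        rw [unionGraph, SimpleGraph.fromRel_adj]
        exact ⟨hxy, Or.inl (Or.inr ⟨b, hb, hx, hy⟩)⟩
  left_inv φ := by
    apply Subtype.ext
    funext j
    rfl
  right_inv c := by
    funext q
    refine SimpleGraph.ConnectedComponent.ind (fun v => ?_) q
    rfl

lemma theta_gram (m m' : PairPartition k) :
    ∑ φ : Fin k → Fin N, theta m φ * theta m' φ = gramO N k m m' := by
  have h1 : ∀ φ : Fin k → Fin N, theta m φ * theta m' φ
      = if (ConstOnBlocks m φ ∧ ConstOnBlocks m' φ) then (1:ℝ) else 0 := by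
    intro φ
    rw [theta, theta]
    by_cases h : ConstOnBlocks m φ <;> by_cases h' : ConstOnBlocks m' φ <;>
      simp [h, h']
  rw [Finset.sum_congr rfl fun φ _ => h1 φ, Finset.sum_boole]
  letI : Fintype (unionGraph m m').ConnectedComponent := Fintype.ofFinite _
  have hcount : (Finset.univ.filter (fun φ : Fin k → Fin N =>
      ConstOnBlocks m φ ∧ ConstOnBlocks m' φ)).card
      = N ^ (Nat.card (unionGraph m m').ConnectedComponent) := by
    rw [← Fintype.card_subtype, Fintype.card_congr (colorEquiv m m'),
      Fintype.card_fun, Fintype.card_fin, Nat.card_eq_fintype_card]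
  rw [hcount, gramO]
  push_cast
  rfl

/-- the evaluation property: `θ_{m'}(Φ m) = δ_{m m'}`. -/
lemma theta_phiCan {m m' : PairPartition k} (φ0 : Fin k → Fin N)
    (hΦ : ∀ x y, φ0 x = φ0 y ↔ blockOf m x = blockOf m y) :
    theta m' φ0 = if m' = m then (1:ℝ) else 0 := by
  rw [theta]
  by_cases hm : m' = m
  · rw [if_pos ((const_eq_of_fib hΦ m').mpr hm), if_pos hm]
  · rw [if_neg (fun hc => hm ((const_eq_of_fib hΦ m').mp hc)), if_neg hm]

noncomputable def Theta (k N : ℕ) : Matrix (Fin k → Fin N) (PairPartition k) ℝ :=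
  Matrix.of fun φ m => theta m φ

lemma Theta_gram : (Theta k N)ᵀ * Theta k N = gramO N k := by
  ext m m'
  rw [Matrix.mul_apply]
  simp only [Matrix.transpose_apply, Theta, Matrix.of_apply]
  exact theta_gram m m'

lemma gram_symm : (gramO N k)ᵀ = gramO N k := by
  rw [← Theta_gram, Matrix.transpose_mul, Matrix.transpose_transpose]

lemma gram_unit {l : ℕ} (hk : k = 2*l) (hlN : l ≤ N)
    (Φ : PairPartition k → (Fin k → Fin N))
    (hΦ : ∀ m x y, Φ m x = Φ m y ↔ blockOf m x = blockOf m y) :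
    IsUnit (gramO N k).det := by
  rw [isUnit_iff_ne_zero]
  intro hdet
  obtain ⟨x, hx0, hxv⟩ := Matrix.exists_mulVec_eq_zero_iff.mpr hdet
  have hzero : (Theta k N) *ᵥ x = 0 := by
    have h1 : ((Theta k N) *ᵥ x) ⬝ᵥ ((Theta k N) *ᵥ x) = 0 := by
      have e1 : ((Theta k N) *ᵥ x) ᵥ* (Theta k N) = (gramO N k) *ᵥ x := by
        rw [show Theta k N = ((Theta k N)ᵀ)ᵀ from (Matrix.transpose_transpose _).symm]
        rw [Matrix.vecMul_transpose, Matrix.transpose_transpose, Matrix.mulVec_mulVec,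
          Theta_gram]
      rw [Matrix.dotProduct_mulVec, e1, hxv]
      simp
    funext φ
    have hnn : ∀ ψ ∈ (Finset.univ : Finset (Fin k → Fin N)),
        0 ≤ ((Theta k N) *ᵥ x) ψ * ((Theta k N) *ᵥ x) ψ := fun ψ _ => mul_self_nonneg _
    have := (Finset.sum_eq_zero_iff_of_nonneg hnn).mp h1 φ (Finset.mem_univ φ)
    exact mul_self_eq_zero.mp this
  apply hx0
  funext m
  have := congrFun hzero (Φ m)
  rw [Matrix.mulVec, dotProduct] at this
  simp only [Theta, Matrix.of_apply] at this
  have hcol : ∀ m' : PairPartition k, theta m' (Φ m) * x m'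
      = if m' = m then x m' else 0 := by
    intro m'
    rw [theta_phiCan (Φ m) (hΦ m)]
    split <;> ring
  rw [Finset.sum_congr rfl (fun m' _ => hcol m'), Finset.sum_ite_eq' Finset.univ m x,
    if_pos (Finset.mem_univ m)] at this
  exact this

end Wg

-- Section 7: measure theory on the orthogonal group
namespace Wg

open MeasureTheory Matrix
open scoped Classical

set_option synthInstance.maxHeartbeats 1000000
set_option maxHeartbeats 1000000

variable {k N : ℕ}

abbrev OG (N : ℕ) := Matrix.orthogonalGroup (Fin N) ℝ

lemma measurable_entry (a b : Fin N) :
    Measurable (fun g : OG N => (g : Matrix (Fin N) (Fin N) ℝ) a b) :=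
  (measurable_pi_apply b).comp ((measurable_pi_apply a).comp measurable_subtype_coe)

lemma measurable_pref (φ ψ : Fin k → Fin N) :
    Measurable (fun g : OG N => ∏ j, (g : Matrix (Fin N) (Fin N) ℝ) (φ j) (ψ j)) :=
  Finset.measurable_prod _ (fun j _ => measurable_entry _ _)

lemma entry_abs_le (g : OG N) (a b : Fin N) :
    |(g : Matrix (Fin N) (Fin N) ℝ) a b| ≤ 1 := by
  rw [abs_le_one_iff_mul_self_le_one]
  have hmem : (g : Matrix (Fin N) (Fin N) ℝ) * star (g : Matrix (Fin N) (Fin N) ℝ) = 1 :=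
    (Matrix.mem_orthogonalGroup_iff (Fin N) ℝ).mp g.2
  have hdiag := congrFun (congrFun hmem a) a
  rw [Matrix.mul_apply] at hdiag
  simp only [Matrix.star_apply, star_trivial] at hdiag
  have hone : (1 : Matrix (Fin N) (Fin N) ℝ) a a = 1 := Matrix.one_apply_eq a
  rw [hone] at hdiag
  calc (g : Matrix (Fin N) (Fin N) ℝ) a b * (g : Matrix (Fin N) (Fin N) ℝ) a b
      ≤ ∑ c, (g : Matrix (Fin N) (Fin N) ℝ) a c * (g : Matrix (Fin N) (Fin N) ℝ) a c :=
        Finset.single_le_sum (f := fun c => (g : Matrix (Fin N) (Fin N) ℝ) a c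
          * (g : Matrix (Fin N) (Fin N) ℝ) a c)
          (fun c _ => mul_self_nonneg _) (Finset.mem_univ b)
    _ = 1 := hdiag

lemma pref_abs_le (g : OG N) (φ ψ : Fin k → Fin N) :
    |∏ j, (g : Matrix (Fin N) (Fin N) ℝ) (φ j) (ψ j)| ≤ 1 := by
  rw [Finset.abs_prod]
  exact Finset.prod_le_one (fun j _ => abs_nonneg _) (fun j _ => entry_abs_le g _ _)

lemma integrable_pref (μ : Measure (OG N)) [IsProbabilityMeasure μ] (φ ψ : Fin k → Fin N) :
    Integrable (fun g : OG N => ∏ j, (g : Matrix (Fin N) (Fin N) ℝ) (φ j) (ψ j)) μ :=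
  Integrable.mono' (integrable_const 1) (measurable_pref φ ψ).aestronglyMeasurable
    (Filter.Eventually.of_forall fun g => by rw [Real.norm_eq_abs]; exact pref_abs_le g φ ψ)

lemma measurable_mul_og : Measurable (fun p : OG N × OG N => p.1 * p.2) := by
  have hval : Measurable (fun p : OG N × OG N =>
      ((p.1 : Matrix (Fin N) (Fin N) ℝ) * (p.2 : Matrix (Fin N) (Fin N) ℝ))) := by
    apply measurable_pi_lambda
    intro a
    apply measurable_pi_lambda
    intro b
    have he : (fun p : OG N × OG N =>
        ((p.1 : Matrix (Fin N) (Fin N) ℝ) * (p.2 : Matrix (Fin N) (Fin N) ℝ)) a b)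
        = (fun p : OG N × OG N => ∑ c, (p.1 : Matrix (Fin N) (Fin N) ℝ) a c
            * (p.2 : Matrix (Fin N) (Fin N) ℝ) c b) := funext fun p => Matrix.mul_apply
    rw [he]
    exact Finset.measurable_sum _ (fun c _ =>
      ((measurable_entry a c).comp measurable_fst).mul
        ((measurable_entry c b).comp measurable_snd))
  exact Measurable.subtype_mk hval

instance : MeasurableMul (OG N) where
  measurable_const_mul c := measurable_mul_og.comp (measurable_const.prodMk measurable_id)
  measurable_mul_const c := measurable_mul_og.comp (measurable_id.prodMk measurable_const)

lemma measurable_inv_og : Measurable (fun g : OG N => g⁻¹) := by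
  have hval : Measurable (fun g : OG N => (star (g : Matrix (Fin N) (Fin N) ℝ))) := by
    apply measurable_pi_lambda
    intro a
    apply measurable_pi_lambda
    intro b
    have he : (fun g : OG N => (star (g : Matrix (Fin N) (Fin N) ℝ)) a b)
        = (fun g : OG N => (g : Matrix (Fin N) (Fin N) ℝ) b a) := by
      funext g
      rw [Matrix.star_apply, star_trivial]
    rw [he]
    exact measurable_entry b a
  exact Measurable.subtype_mk hval

section meas

variable (μ : Measure (OG N)) [IsProbabilityMeasure μ] [μ.IsMulLeftInvariant]

lemma integral_inv_eq (f : OG N → ℝ) (hf : Measurable f) (hb : ∀ g, |f g| ≤ 1) :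
    ∫ g, f g⁻¹ ∂μ = ∫ g, f g ∂μ := by
  set ν : Measure (OG N) := Measure.map (fun g : OG N => g⁻¹) μ with hν
  haveI : IsProbabilityMeasure ν :=
    Measure.isProbabilityMeasure_map measurable_inv_og.aemeasurable
  have hmeas2 : Measurable (fun p : OG N × OG N => f (p.1 * p.2)) :=
    hf.comp measurable_mul_og
  have hint2 : Integrable (fun p : OG N × OG N => f (p.1 * p.2)) (ν.prod μ) :=
    Integrable.mono' (integrable_const 1) hmeas2.aestronglyMeasurable
      (Filter.Eventually.of_forall fun p => by rw [Real.norm_eq_abs]; exact hb _)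
  have hside1 : ∫ p : OG N × OG N, f (p.1 * p.2) ∂(ν.prod μ) = ∫ g, f g ∂μ := by
    rw [MeasureTheory.integral_prod _ hint2]
    have hconst : (fun h : OG N => ∫ g, f (h * g) ∂μ) = (fun _ => ∫ g, f g ∂μ) :=
      funext fun h => integral_mul_left_eq_self f h
    rw [hconst]
    simp
  have hr : ∀ g : OG N, ∫ h, f (h * g) ∂ν = ∫ h, f h ∂ν := by
    intro g
    have e1 : ∫ h, f (h * g) ∂(Measure.map (fun g : OG N => g⁻¹) μ) = ∫ x, f (x⁻¹ * g) ∂μ :=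
      MeasureTheory.integral_map measurable_inv_og.aemeasurable
        (show AEStronglyMeasurable (fun h : OG N => f (h * g))
            (Measure.map (fun g : OG N => g⁻¹) μ) from
          (hf.comp (measurable_mul_const g)).aestronglyMeasurable)
    have e2 : ∫ x, f (x⁻¹ * g) ∂μ = ∫ x, f ((g⁻¹ * x)⁻¹) ∂μ := by
      refine integral_congr_ae (Filter.Eventually.of_forall fun x => ?_)
      show f (x⁻¹ * g) = f ((g⁻¹ * x)⁻¹)
      rw [_root_.mul_inv_rev, inv_inv]
    have e3 : ∫ x, f ((g⁻¹ * x)⁻¹) ∂μ = ∫ x, f x⁻¹ ∂μ :=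
      integral_mul_left_eq_self (fun x => f x⁻¹) g⁻¹
    have e4 : ∫ h, f h ∂(Measure.map (fun g : OG N => g⁻¹) μ) = ∫ x, f x⁻¹ ∂μ :=
      MeasureTheory.integral_map measurable_inv_og.aemeasurable hf.aestronglyMeasurable
    rw [hν, e1, e2, e3, ← e4]
  have hside2 : ∫ p : OG N × OG N, f (p.1 * p.2) ∂(ν.prod μ) = ∫ g, f g ∂ν := by
    rw [MeasureTheory.integral_prod_symm _ hint2]
    have hconst : (fun g : OG N => ∫ h, f (h * g) ∂ν) = (fun _ => ∫ h, f h ∂ν) :=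
      funext fun g => hr g
    rw [hconst]
    simp
  have hμν : ∫ g, f g ∂μ = ∫ g, f g ∂ν := by rw [← hside1, hside2]
  have hfin : ∫ g, f g ∂(Measure.map (fun g : OG N => g⁻¹) μ) = ∫ g, f g⁻¹ ∂μ :=
    MeasureTheory.integral_map measurable_inv_og.aemeasurable hf.aestronglyMeasurable
  rw [← hfin, hμν, hν]

/-- the matrix of moments. -/
noncomputable def Emat (φ ψ : Fin k → Fin N) : ℝ :=
  ∫ g, ∏ j, (g : Matrix (Fin N) (Fin N) ℝ) (φ j) (ψ j) ∂μ

lemma Emat_symm (φ ψ : Fin k → Fin N) : Emat μ φ ψ = Emat μ ψ φ := by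
  have hkey := integral_inv_eq μ (fun g : OG N => ∏ j, (g : Matrix (Fin N) (Fin N) ℝ)
    (φ j) (ψ j)) (measurable_pref φ ψ) (fun g => pref_abs_le g φ ψ)
  rw [Emat, Emat, ← hkey]
  refine integral_congr_ae (Filter.Eventually.of_forall fun g => ?_)
  refine Finset.prod_congr rfl fun j _ => ?_
  show (g : Matrix (Fin N) (Fin N) ℝ) (ψ j) (φ j)
    = ((g⁻¹ : OG N) : Matrix (Fin N) (Fin N) ℝ) (φ j) (ψ j)
  have hcoe : ((g⁻¹ : OG N) : Matrix (Fin N) (Fin N) ℝ)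
      = star (g : Matrix (Fin N) (Fin N) ℝ) := rfl
  rw [hcoe, Matrix.star_apply, star_trivial]

lemma invt_Emat (ψ : Fin k → Fin N) : Invt (fun φ => Emat μ φ ψ) := by
  intro h φ
  have hmap : ∫ g, (∏ j, ((h * g : OG N) : Matrix (Fin N) (Fin N) ℝ) (φ j) (ψ j)) ∂μ
      = Emat μ φ ψ := by
    rw [Emat]
    exact integral_mul_left_eq_self
      (fun g : OG N => ∏ j, (g : Matrix (Fin N) (Fin N) ℝ) (φ j) (ψ j)) h
  have hexp : ∀ g : OG N, (∏ j, ((h * g : OG N) : Matrix (Fin N) (Fin N) ℝ) (φ j) (ψ j))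
      = ∑ χ : Fin k → Fin N, (∏ j, (h : Matrix (Fin N) (Fin N) ℝ) (φ j) (χ j))
          * ∏ j, (g : Matrix (Fin N) (Fin N) ℝ) (χ j) (ψ j) := by
    intro g
    have hcoe : ((h * g : OG N) : Matrix (Fin N) (Fin N) ℝ)
        = (h : Matrix (Fin N) (Fin N) ℝ) * (g : Matrix (Fin N) (Fin N) ℝ) := rfl
    calc ∏ j, ((h * g : OG N) : Matrix (Fin N) (Fin N) ℝ) (φ j) (ψ j)
        = ∏ j, ∑ c, (h : Matrix (Fin N) (Fin N) ℝ) (φ j) c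
            * (g : Matrix (Fin N) (Fin N) ℝ) c (ψ j) := by
          rw [hcoe]
          exact Finset.prod_congr rfl fun j _ => Matrix.mul_apply
      _ = ∑ χ ∈ Fintype.piFinset (fun _ : Fin k => (Finset.univ : Finset (Fin N))),
            ∏ j, ((h : Matrix (Fin N) (Fin N) ℝ) (φ j) (χ j)
              * (g : Matrix (Fin N) (Fin N) ℝ) (χ j) (ψ j)) := Finset.prod_univ_sum _ _
      _ = ∑ χ : Fin k → Fin N, (∏ j, (h : Matrix (Fin N) (Fin N) ℝ) (φ j) (χ j))
            * ∏ j, (g : Matrix (Fin N) (Fin N) ℝ) (χ j) (ψ j) := by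
          rw [Fintype.piFinset_univ]
          exact Finset.sum_congr rfl fun χ _ => Finset.prod_mul_distrib
  calc ∑ χ : Fin k → Fin N, (∏ j, (h : Matrix (Fin N) (Fin N) ℝ) (φ j) (χ j)) * Emat μ χ ψ
      = ∑ χ : Fin k → Fin N, ∫ g, (∏ j, (h : Matrix (Fin N) (Fin N) ℝ) (φ j) (χ j))
          * ∏ j, (g : Matrix (Fin N) (Fin N) ℝ) (χ j) (ψ j) ∂μ := by
        refine Finset.sum_congr rfl fun χ _ => ?_
        rw [Emat, MeasureTheory.integral_const_mul]
    _ = ∫ g, ∑ χ : Fin k → Fin N, (∏ j, (h : Matrix (Fin N) (Fin N) ℝ) (φ j) (χ j))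
          * ∏ j, (g : Matrix (Fin N) (Fin N) ℝ) (χ j) (ψ j) ∂μ := by
        rw [MeasureTheory.integral_finset_sum]
        intro χ _
        exact (integrable_pref μ χ ψ).const_mul _
    _ = ∫ g, (∏ j, ((h * g : OG N) : Matrix (Fin N) (Fin N) ℝ) (φ j) (ψ j)) ∂μ := by
        refine integral_congr_ae (Filter.Eventually.of_forall fun g => ?_)
        exact (hexp g).symm
    _ = Emat μ φ ψ := hmap

lemma Emat_theta (m : PairPartition k) (φ : Fin k → Fin N) :
    ∑ ψ : Fin k → Fin N, Emat μ φ ψ * theta m ψ = theta m φ := by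
  calc ∑ ψ : Fin k → Fin N, Emat μ φ ψ * theta m ψ
      = ∑ ψ : Fin k → Fin N, ∫ g,
          (∏ j, (g : Matrix (Fin N) (Fin N) ℝ) (φ j) (ψ j)) * theta m ψ ∂μ := by
        refine Finset.sum_congr rfl fun ψ _ => ?_
        rw [Emat, MeasureTheory.integral_mul_const]
    _ = ∫ g, ∑ ψ : Fin k → Fin N,
          (∏ j, (g : Matrix (Fin N) (Fin N) ℝ) (φ j) (ψ j)) * theta m ψ ∂μ := by
        rw [MeasureTheory.integral_finset_sum]
        intro ψ _
        exact (integrable_pref μ φ ψ).mul_const _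
    _ = ∫ _g, theta m φ ∂μ := by
        refine integral_congr_ae (Filter.Eventually.of_forall fun g => ?_)
        exact invt_theta m g φ
    _ = theta m φ := by simp

lemma Emat_odd (hodd : Odd k) (φ ψ : Fin k → Fin N) : Emat μ φ ψ = 0 := by
  have hmem : (-1 : Matrix (Fin N) (Fin N) ℝ) ∈ Matrix.orthogonalGroup (Fin N) ℝ := by
    rw [Matrix.mem_orthogonalGroup_iff]
    simp
  have hmap : ∫ g, (∏ j, (((⟨-1, hmem⟩ : OG N) * g : OG N) : Matrix (Fin N) (Fin N) ℝ)
      (φ j) (ψ j)) ∂μ = Emat μ φ ψ := by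
    rw [Emat]
    exact integral_mul_left_eq_self
      (fun g : OG N => ∏ j, (g : Matrix (Fin N) (Fin N) ℝ) (φ j) (ψ j)) _
  have hneg : ∀ g : OG N, (∏ j, (((⟨-1, hmem⟩ : OG N) * g : OG N) : Matrix (Fin N) (Fin N) ℝ)
      (φ j) (ψ j)) = - ∏ j, (g : Matrix (Fin N) (Fin N) ℝ) (φ j) (ψ j) := by
    intro g
    have hcoe : (((⟨-1, hmem⟩ : OG N) * g : OG N) : Matrix (Fin N) (Fin N) ℝ)
        = -(g : Matrix (Fin N) (Fin N) ℝ) := by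
      show (-1 : Matrix (Fin N) (Fin N) ℝ) * (g : Matrix (Fin N) (Fin N) ℝ) = _
      simp
    rw [hcoe]
    calc ∏ j, (-(g : Matrix (Fin N) (Fin N) ℝ)) (φ j) (ψ j)
        = ∏ j, ((-1 : ℝ) * (g : Matrix (Fin N) (Fin N) ℝ) (φ j) (ψ j)) := by
          refine Finset.prod_congr rfl fun j _ => ?_
          rw [Matrix.neg_apply]
          ring
      _ = (-1 : ℝ) ^ k * ∏ j, (g : Matrix (Fin N) (Fin N) ℝ) (φ j) (ψ j) := by
          rw [Finset.prod_mul_distrib, Finset.prod_const, Finset.card_univ, Fintype.card_fin]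
      _ = - ∏ j, (g : Matrix (Fin N) (Fin N) ℝ) (φ j) (ψ j) := by
          rw [hodd.neg_one_pow]
          ring
  have h2 : ∫ g, (∏ j, (((⟨-1, hmem⟩ : OG N) * g : OG N) : Matrix (Fin N) (Fin N) ℝ)
      (φ j) (ψ j)) ∂μ = - Emat μ φ ψ := by
    rw [show (fun g : OG N => ∏ j, (((⟨-1, hmem⟩ : OG N) * g : OG N) : Matrix (Fin N) (Fin N) ℝ)
      (φ j) (ψ j)) = (fun g : OG N => - ∏ j, (g : Matrix (Fin N) (Fin N) ℝ) (φ j) (ψ j))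
      from funext hneg]
    rw [MeasureTheory.integral_neg, Emat]
  rw [h2] at hmap
  linarith

end meas

end Wg

set_option synthInstance.maxHeartbeats 1000000
set_option maxHeartbeats 1000000

/-- The orthogonal Weingarten integration formula: for Haar measure on `O(N)`,
the integral of `∏ⱼ g_{φ(j) ψ(j)}` vanishes for odd `k`, while for `k = 2l` with
`N ≥ l` the Gram matrix `(c_N(m,m'))` is invertible and the integral equals
`∑_{m,m'} 1[φ const on m] 1[ψ const on m'] Wg_{O(N)}(m,m')` with `Wg` its inverse. -/
theorem weingarten_orthogonal
    (k N : ℕ) (φ ψ : Fin k → Fin N)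
    (μ : Measure (Matrix.orthogonalGroup (Fin N) ℝ))
    (hprob : IsProbabilityMeasure μ) (hinv : μ.IsMulLeftInvariant) :
    (Odd k →
      (∫ g, ∏ j, (g : Matrix (Fin N) (Fin N) ℝ) (φ j) (ψ j) ∂ μ) = 0) ∧
    (∀ l : ℕ, k = 2 * l → l ≤ N →
      IsUnit (gramO N k).det ∧
      (∫ g, ∏ j, (g : Matrix (Fin N) (Fin N) ℝ) (φ j) (ψ j) ∂ μ) =
        ∑ m : PairPartition k, ∑ m' : PairPartition k,
          (if ConstOnBlocks m φ then (1 : ℝ) else 0) *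
          (if ConstOnBlocks m' ψ then (1 : ℝ) else 0) *
          (gramO N k)⁻¹ m m') := by
  haveI := hprob
  haveI := hinv
  constructor
  · intro hodd
    exact Wg.Emat_odd μ hodd φ ψ
  · intro l hk hlN
    have hcard : ∀ m : PairPartition k, m.1.card ≤ N := by
      intro m
      have h2 := Wg.two_mul_card_blocks m
      omega
    choose Φ hΦ using fun m : PairPartition k => Wg.exists_phiCan (N := N) m (hcard m)
    have hdet := Wg.gram_unit hk hlN Φ hΦ
    refine ⟨hdet, ?_⟩
    set G : Matrix (PairPartition k) (PairPartition k) ℝ := gramO N k with hG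
    set Θ : Matrix (Fin k → Fin N) (PairPartition k) ℝ := Wg.Theta k N with hΘ
    set P : Matrix (Fin k → Fin N) (Fin k → Fin N) ℝ :=
      Matrix.of fun φ' ψ' => Wg.Emat μ φ' ψ' with hP
    set A : Matrix (PairPartition k) (Fin k → Fin N) ℝ :=
      Matrix.of fun m ψ' => Wg.Emat μ (Φ m) ψ' with hA
    have hPθ : P * Θ = Θ := by
      ext φ' m
      rw [Matrix.mul_apply]
      simp only [hP, hΘ, Wg.Theta, Matrix.of_apply]
      exact Wg.Emat_theta μ m φ'
    have hPsym : Pᵀ = P := by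
      ext φ' ψ'
      simp only [Matrix.transpose_apply, hP, Matrix.of_apply]
      exact Wg.Emat_symm μ ψ' φ'
    have hrepr : P = Θ * A := by
      ext φ' ψ'
      rw [Matrix.mul_apply]
      simp only [hP, hΘ, hA, Wg.Theta, Matrix.of_apply]
      have hspan := Wg.invt_span hk hlN (Wg.invt_Emat μ ψ') Φ hΦ φ'
      rw [hspan]
      exact Finset.sum_congr rfl fun m _ => mul_comm _ _
    have hGA : Θᵀ * P = G * A := by
      rw [hrepr, ← Matrix.mul_assoc, hΘ, hG, Wg.Theta_gram]
    have hAeq : A = G⁻¹ * (Θᵀ * P) := by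
      rw [hGA, ← Matrix.mul_assoc, Matrix.nonsing_inv_mul G hdet, Matrix.one_mul]
    have step1 : P = Θ * (G⁻¹ * (Θᵀ * P)) := by
      conv_lhs => rw [hrepr, hAeq]
    have hfinal : P = Θ * G⁻¹ * Θᵀ := by
      have h1 := congrArg Matrix.transpose step1
      rw [Matrix.transpose_mul, Matrix.transpose_mul, Matrix.transpose_mul,
        Matrix.transpose_transpose, hPsym, hPθ, Matrix.transpose_nonsing_inv] at h1
      rw [hG, Wg.gram_symm] at h1
      rw [h1, Matrix.mul_assoc]
    have hentry : P φ ψ = ∑ m : PairPartition k, ∑ m' : PairPartition k,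
        Wg.theta m φ * Wg.theta m' ψ * G⁻¹ m m' := by
      rw [hfinal]
      show ∑ m' : PairPartition k, (Θ * G⁻¹) φ m' * Θᵀ m' ψ = _
      calc ∑ m' : PairPartition k, (Θ * G⁻¹) φ m' * Θᵀ m' ψ
          = ∑ m' : PairPartition k, ∑ m : PairPartition k,
              Θ φ m * G⁻¹ m m' * Θᵀ m' ψ := by
            refine Finset.sum_congr rfl fun m' _ => ?_
            rw [Matrix.mul_apply, Finset.sum_mul]
        _ = ∑ m : PairPartition k, ∑ m' : PairPartition k,
              Θ φ m * G⁻¹ m m' * Θᵀ m' ψ := Finset.sum_comm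
        _ = ∑ m : PairPartition k, ∑ m' : PairPartition k,
              Wg.theta m φ * Wg.theta m' ψ * G⁻¹ m m' := by
            refine Finset.sum_congr rfl fun m _ => Finset.sum_congr rfl fun m' _ => ?_
            simp only [hΘ, Wg.Theta, Matrix.transpose_apply, Matrix.of_apply]
            ring
    have hlhs : (∫ g, ∏ j, (g : Matrix (Fin N) (Fin N) ℝ) (φ j) (ψ j) ∂ μ) = P φ ψ := rfl
    rw [hlhs, hentry]
    refine Finset.sum_congr rfl fun m _ => Finset.sum_congr rfl fun m' _ => ?_
    rw [Wg.theta, Wg.theta]
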